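/- Let n ≥ 1, K an infinite field. The big Bruhat cell N w₀ B of GL(n,K) consists precisely of the invertible matrices X all of whose lower-left corner minors are nonzero: for each k = 1,…,n, the determinant of the submatrix of X with rows {n-k+1,…,n} and columns {1,…,k} is nonzero. -/

import Mathlib

/-!
Write `J` for the antidiagonal matrix `w₀`. Conjugation by `J` exchanges upper and lower
triangular matrices, so `X = u J b` with `u` unipotent upper triangular and `b` invertible upper
triangular exactly when `J X = (J u J) b` is an LU decomposition. A matrix has an LU decomposition
iff its leading principal minors are nonzero: the leading `k × k` block of `L U` is `L_k U_k`, and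
conversely an LU decomposition of the leading `n × n` block extends to the `(n+1) × (n+1)` matrix
through the Schur complement, which is nonzero because the determinant is. The leading minors of
`J X` are, up to sign, the lower-left corner minors of `X`.
-/

namespace Matrix

variable {R : Type*} {n : ℕ}

def leadingSubmatrix (M : Matrix (Fin n) (Fin n) R) (k : ℕ) (hk : k ≤ n) :
    Matrix (Fin k) (Fin k) R :=
  M.submatrix (Fin.castLE hk) (Fin.castLE hk)

def lowerLeftSubmatrix (M : Matrix (Fin n) (Fin n) R) (k : ℕ) (hk : k ≤ n) :
    Matrix (Fin k) (Fin k) R :=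
  M.submatrix (fun t => ⟨n - k + t, by omega⟩) (Fin.castLE hk)

def HasLUDecomposition [NonAssocSemiring R] (M : Matrix (Fin n) (Fin n) R) : Prop :=
  ∃ L U : Matrix (Fin n) (Fin n) R, (∀ i, L i i = 1) ∧ L.IsLowerTriangular ∧
    (∀ i, U i i ≠ 0) ∧ U.IsUpperTriangular ∧ M = L * U

@[simp]
theorem leadingSubmatrix_self (M : Matrix (Fin n) (Fin n) R) :
    M.leadingSubmatrix n le_rfl = M := by
  simp [leadingSubmatrix]

@[simp]
theorem lowerLeftSubmatrix_self (M : Matrix (Fin n) (Fin n) R) :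
    M.lowerLeftSubmatrix n le_rfl = M := by
  ext i j
  simp [lowerLeftSubmatrix]

theorem IsUpperTriangular.leadingSubmatrix [Zero R] {U : Matrix (Fin n) (Fin n) R}
    (hU : U.IsUpperTriangular) (k : ℕ) (hk : k ≤ n) :
    (U.leadingSubmatrix k hk).IsUpperTriangular :=
  fun _ _ h => hU h

theorem IsLowerTriangular.leadingSubmatrix [Zero R] {L : Matrix (Fin n) (Fin n) R}
    (hL : L.IsLowerTriangular) (k : ℕ) (hk : k ≤ n) :
    (L.leadingSubmatrix k hk).IsLowerTriangular :=
  fun _ _ h => hL h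

theorem IsUpperTriangular.det_ne_zero [CommRing R] [IsDomain R] {U : Matrix (Fin n) (Fin n) R}
    (hU : U.IsUpperTriangular) (hd : ∀ i, U i i ≠ 0) : U.det ≠ 0 := by
  rw [det_of_isUpperTriangular hU]
  exact Finset.prod_ne_zero_iff.2 fun i _ => hd i

theorem IsLowerTriangular.det_eq_one [CommRing R] {L : Matrix (Fin n) (Fin n) R}
    (hL : L.IsLowerTriangular) (hd : ∀ i, L i i = 1) : L.det = 1 := by
  rw [det_of_isLowerTriangular L hL]
  exact Finset.prod_eq_one fun i _ => hd i

theorem IsLowerTriangular.leadingSubmatrix_mul [NonUnitalNonAssocSemiring R]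
    {L : Matrix (Fin n) (Fin n) R} (hL : L.IsLowerTriangular) (M : Matrix (Fin n) (Fin n) R)
    (k : ℕ) (hk : k ≤ n) :
    (L * M).leadingSubmatrix k hk = L.leadingSubmatrix k hk * M.leadingSubmatrix k hk := by
  ext i j
  refine (Fintype.sum_of_injective _ (Fin.castLE_injective hk) _ _ ?_ fun _ => rfl).symm
  intro l hl
  have hkl : k ≤ l := by
    by_contra! h
    exact hl ⟨⟨l, h⟩, rfl⟩
  exact mul_eq_zero_of_left (hL (Fin.lt_def.2 (i.isLt.trans_le hkl) : Fin.castLE hk i < l)) _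

theorem HasLUDecomposition.det_leadingSubmatrix_ne_zero [CommRing R] [IsDomain R]
    {M : Matrix (Fin n) (Fin n) R} (hM : M.HasLUDecomposition) (k : ℕ) (hk : k ≤ n) :
    (M.leadingSubmatrix k hk).det ≠ 0 := by
  obtain ⟨L, U, hL1, hL, hU0, hU, rfl⟩ := hM
  rw [hL.leadingSubmatrix_mul, det_mul, (hL.leadingSubmatrix k hk).det_eq_one fun _ => hL1 _,
    one_mul]
  exact (hU.leadingSubmatrix k hk).det_ne_zero fun _ => hU0 _

theorem leadingSubmatrix_reindex_finSumFinEquiv (Z : Matrix (Fin n ⊕ Fin 1) (Fin n ⊕ Fin 1) R)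
    (k : ℕ) (hk : k ≤ n) :
    (reindex finSumFinEquiv finSumFinEquiv Z).leadingSubmatrix k (hk.trans n.le_succ) =
      Z.toBlocks₁₁.leadingSubmatrix k hk := by
  ext i j
  exact congr_arg₂ Z (finSumFinEquiv_symm_apply_castSucc (Fin.castLE hk i))
    (finSumFinEquiv_symm_apply_castSucc (Fin.castLE hk j))

theorem IsUpperTriangular.reindex_fromBlocks [Zero R] {A : Matrix (Fin n) (Fin n) R}
    (hA : A.IsUpperTriangular) (B : Matrix (Fin n) (Fin 1) R) (D : Matrix (Fin 1) (Fin 1) R) :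
    (reindex finSumFinEquiv finSumFinEquiv (fromBlocks A B 0 D)).IsUpperTriangular := by
  intro i j hij
  cases i using Fin.lastCases <;> cases j using Fin.lastCases
  · simp at hij
  · simp
  · exact absurd hij (Fin.le_last _).not_gt
  · simpa using hA (Fin.castSucc_lt_castSucc_iff.1 hij)

theorem IsLowerTriangular.reindex_fromBlocks [Zero R] {A : Matrix (Fin n) (Fin n) R}
    (hA : A.IsLowerTriangular) (C : Matrix (Fin 1) (Fin n) R) (D : Matrix (Fin 1) (Fin 1) R) :
    (reindex finSumFinEquiv finSumFinEquiv (fromBlocks A 0 C D)).IsLowerTriangular := by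
  intro i j hij
  cases i using Fin.lastCases <;> cases j using Fin.lastCases
  · simp at hij
  · exact absurd hij (Fin.le_last _).not_gt
  · simp
  · simpa using hA (Fin.castSucc_lt_castSucc_iff.1 hij)

theorem fromBlocks_eq_mul_of_eq_mul {m p : Type*} [Fintype m] [DecidableEq m] [Fintype p]
    [DecidableEq p] [CommRing R] {A L U : Matrix m m R} (hA : A = L * U) (hL : IsUnit L.det)
    (hU : IsUnit U.det) (B : Matrix m p R) (C : Matrix p m R) (D : Matrix p p R) :
    fromBlocks A B C D =
      fromBlocks L 0 (C * U⁻¹) 1 *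
        fromBlocks U (L⁻¹ * B) 0 (D - C * U⁻¹ * (L⁻¹ * B)) := by
  rw [fromBlocks_multiply]
  simp [hA, nonsing_inv_mul_cancel_right _ _ hU, mul_nonsing_inv_cancel_left _ _ hL]

theorem hasLUDecomposition_of_det_leadingSubmatrix_ne_zero {K : Type*} [Field K] :
    ∀ {n : ℕ} (M : Matrix (Fin n) (Fin n) K),
      (∀ k (hk : k ≤ n), (M.leadingSubmatrix k hk).det ≠ 0) → M.HasLUDecomposition
  | 0, _, _ =>
    ⟨1, 1, finZeroElim, blockTriangular_one, finZeroElim, blockTriangular_one,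
      Subsingleton.elim (α := Matrix (Fin 0) (Fin 0) K) _ _⟩
  | n + 1, M, hM => by
    obtain ⟨Z, rfl⟩ := (reindex finSumFinEquiv finSumFinEquiv).surjective M
    obtain ⟨L, U, hL1, hL, hU0, hU, hLU⟩ := hasLUDecomposition_of_det_leadingSubmatrix_ne_zero
      Z.toBlocks₁₁ fun k hk => leadingSubmatrix_reindex_finSumFinEquiv Z k hk ▸ hM k _
    have hLdet := hL.det_eq_one hL1
    obtain ⟨x, y, S, hZ⟩ : ∃ x y S, Z = fromBlocks L 0 x 1 * fromBlocks U y 0 S :=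
      ⟨_, _, _, (fromBlocks_toBlocks Z).symm.trans <|
        fromBlocks_eq_mul_of_eq_mul hLU (by simp [hLdet]) (hU.det_ne_zero hU0).isUnit _ _ _⟩
    have hS : S 0 0 ≠ 0 := by
      have hdet : Z.det = U.det * S 0 0 := by
        rw [hZ, det_mul, det_fromBlocks_zero₁₂, det_fromBlocks_zero₂₁, hLdet, det_fin_one]
        simp
      have hZdet : Z.det ≠ 0 := by simpa using hM (n + 1) le_rfl
      exact right_ne_zero_of_mul (hdet ▸ hZdet)
    refine ⟨reindex finSumFinEquiv finSumFinEquiv (fromBlocks L 0 x 1),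
      reindex finSumFinEquiv finSumFinEquiv (fromBlocks U y 0 S), fun i => ?_,
      hL.reindex_fromBlocks _ _, fun i => ?_, hU.reindex_fromBlocks _ _, ?_⟩
    · cases i using Fin.lastCases <;> simp [hL1]
    · cases i using Fin.lastCases <;> simp [hU0, hS]
    · rw [hZ, reindex_apply, reindex_apply, reindex_apply, submatrix_mul_equiv]

theorem hasLUDecomposition_iff_det_leadingSubmatrix_ne_zero {K : Type*} [Field K]
    (M : Matrix (Fin n) (Fin n) K) :
    M.HasLUDecomposition ↔ ∀ k (hk : k ≤ n), (M.leadingSubmatrix k hk).det ≠ 0 :=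
  ⟨HasLUDecomposition.det_leadingSubmatrix_ne_zero,
    hasLUDecomposition_of_det_leadingSubmatrix_ne_zero M⟩

variable (R) in
theorem permMatrix_revPerm_apply [Zero R] [One R] (i j : Fin n) :
    Fin.revPerm.permMatrix R i j = if (i : ℕ) + j + 1 = n then 1 else 0 := by
  have : Fin.rev i = j ↔ (i : ℕ) + j + 1 = n := by
    rw [Fin.ext_iff, Fin.val_rev]
    omega
  simp [PEquiv.toMatrix_apply, this]

section Reversal

variable [Semiring R]

theorem permMatrix_revPerm_mul (M : Matrix (Fin n) (Fin n) R) :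
    Fin.revPerm.permMatrix R * M = M.submatrix Fin.rev id :=
  PEquiv.toMatrix_toPEquiv_mul _ M

theorem mul_permMatrix_revPerm (M : Matrix (Fin n) (Fin n) R) :
    M * Fin.revPerm.permMatrix R = M.submatrix id Fin.rev := by
  rw [PEquiv.mul_toMatrix_toPEquiv, Fin.revPerm_symm]
  rfl

theorem permMatrix_revPerm_mul_self :
    Fin.revPerm.permMatrix R * Fin.revPerm.permMatrix R = (1 : Matrix (Fin n) (Fin n) R) := by
  rw [← permMatrix_mul, show Fin.revPerm * Fin.revPerm = 1 from Equiv.ext Fin.rev_rev,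
    permMatrix_one]

theorem permMatrix_revPerm_conj_apply (M : Matrix (Fin n) (Fin n) R) (i j : Fin n) :
    (Fin.revPerm.permMatrix R * M * Fin.revPerm.permMatrix R : Matrix (Fin n) (Fin n) R) i j =
      M i.rev j.rev := by
  rw [permMatrix_revPerm_mul, mul_permMatrix_revPerm]
  rfl

theorem permMatrix_revPerm_mul_self_mul (M : Matrix (Fin n) (Fin n) R) :
    Fin.revPerm.permMatrix R * (Fin.revPerm.permMatrix R * M) = M := by
  rw [← Matrix.mul_assoc, permMatrix_revPerm_mul_self, Matrix.one_mul]

theorem IsUpperTriangular.permMatrix_revPerm_conj {M : Matrix (Fin n) (Fin n) R}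
    (hM : M.IsUpperTriangular) :
    (Fin.revPerm.permMatrix R * M * Fin.revPerm.permMatrix R).IsLowerTriangular := by
  intro i j h
  rw [permMatrix_revPerm_conj_apply]
  exact hM (Fin.rev_lt_rev.2 h)

theorem IsLowerTriangular.permMatrix_revPerm_conj {M : Matrix (Fin n) (Fin n) R}
    (hM : M.IsLowerTriangular) :
    (Fin.revPerm.permMatrix R * M * Fin.revPerm.permMatrix R).IsUpperTriangular := by
  intro i j h
  rw [permMatrix_revPerm_conj_apply]
  exact hM (Fin.rev_lt_rev.2 h)

theorem exists_mul_permMatrix_revPerm_mul_iff (X : Matrix (Fin n) (Fin n) R) :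
    (∃ u b : Matrix (Fin n) (Fin n) R, (∀ i, u i i = 1) ∧ u.IsUpperTriangular ∧
      (∀ i, b i i ≠ 0) ∧ b.IsUpperTriangular ∧ X = u * Fin.revPerm.permMatrix R * b) ↔
    (Fin.revPerm.permMatrix R * X).HasLUDecomposition := by
  constructor
  · rintro ⟨u, b, hu1, hu, hb0, hb, rfl⟩
    refine ⟨_, b, fun i => ?_, hu.permMatrix_revPerm_conj, hb0, hb, ?_⟩
    · rw [permMatrix_revPerm_conj_apply, hu1]
    · simp only [Matrix.mul_assoc]
  · rintro ⟨L, U, hL1, hL, hU0, hU, hLU⟩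
    refine ⟨_, U, fun i => ?_, hL.permMatrix_revPerm_conj, hU0, hU, ?_⟩
    · rw [permMatrix_revPerm_conj_apply, hL1]
    · rw [← permMatrix_revPerm_mul_self_mul X, hLU]
      simp only [Matrix.mul_assoc, permMatrix_revPerm_mul_self_mul]

theorem leadingSubmatrix_permMatrix_revPerm_mul (X : Matrix (Fin n) (Fin n) R) (k : ℕ)
    (hk : k ≤ n) :
    (Fin.revPerm.permMatrix R * X).leadingSubmatrix k hk =
      (X.lowerLeftSubmatrix k hk).submatrix Fin.rev id := by
  ext i j
  rw [leadingSubmatrix, permMatrix_revPerm_mul]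
  simp only [submatrix_apply, lowerLeftSubmatrix, id]
  congr 1
  ext
  simp only [Fin.val_rev, Fin.val_castLE]
  omega

end Reversal

theorem det_leadingSubmatrix_permMatrix_revPerm_mul_ne_zero_iff [CommRing R]
    (X : Matrix (Fin n) (Fin n) R) (k : ℕ) (hk : k ≤ n) :
    ((Fin.revPerm.permMatrix R * X).leadingSubmatrix k hk).det ≠ 0 ↔
      (X.lowerLeftSubmatrix k hk).det ≠ 0 := by
  rw [leadingSubmatrix_permMatrix_revPerm_mul,
    show (Fin.rev : Fin k → Fin k) = Fin.revPerm from rfl, det_permute]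
  exact ((Equiv.Perm.sign Fin.revPerm).isUnit.map (Int.castRingHom R)).mul_right_eq_zero.not

theorem forall_det_lowerLeftSubmatrix_ne_zero_iff {K : Type*} [Field K]
    (X : Matrix (Fin n) (Fin n) K) :
    (∀ k (hk : k ≤ n), (X.lowerLeftSubmatrix k hk).det ≠ 0) ↔
      IsUnit X.det ∧
        ∀ k, 1 ≤ k → ∀ hk : k ≤ n, (X.lowerLeftSubmatrix k hk).det ≠ 0 := by
  refine ⟨fun h => ⟨isUnit_iff_ne_zero.2 (by simpa using h n le_rfl), fun k _ => h k⟩, ?_⟩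
  rintro ⟨-, h⟩ k hk
  rcases k.eq_zero_or_pos with rfl | hk0
  · simp
  · exact h k hk0 hk

end Matrix

open Matrix

/-- the big Bruhat cell N w₀ B of GL(n,K) consists exactly of the invertible
matrices all of whose lower-left corner minors (last k rows, first k columns, 1 ≤ k ≤ n)
are nonzero. -/
theorem stmt12 {K : Type*} [Field K] {n : ℕ}
    (w₀ : Matrix (Fin n) (Fin n) K)
    (hw : ∀ i j : Fin n, w₀ i j = if (i : ℕ) + (j : ℕ) + 1 = n then 1 else 0)
    (X : Matrix (Fin n) (Fin n) K) :
    (∃ u b : Matrix (Fin n) (Fin n) K,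
      (∀ i, u i i = 1) ∧ (∀ i j : Fin n, j < i → u i j = 0) ∧
      (∀ i, b i i ≠ 0) ∧ (∀ i j : Fin n, j < i → b i j = 0) ∧
      X = u * w₀ * b) ↔
    (IsUnit X.det ∧ ∀ k : ℕ, 1 ≤ k → ∀ hk2 : k ≤ n,
      (X.submatrix
        (fun t : Fin k => (⟨n - k + t.val, by have := t.isLt; omega⟩ : Fin n))
        (fun t : Fin k => (⟨t.val, by have := t.isLt; omega⟩ : Fin n))).det ≠ 0) := by
  obtain rfl : w₀ = Fin.revPerm.permMatrix K :=
    ext fun i j => (hw i j).trans (permMatrix_revPerm_apply K i j).symm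
  refine (exists_mul_permMatrix_revPerm_mul_iff X).trans ?_
  rw [hasLUDecomposition_iff_det_leadingSubmatrix_ne_zero]
  simp only [det_leadingSubmatrix_permMatrix_revPerm_mul_ne_zero_iff]
  exact forall_det_lowerLeftSubmatrix_ne_zero_iff X
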